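/- Let I be an interval, X = (X_n) an I-valued submartingale, δ ≥ 0, and f : I → ℝ a non-decreasing δ-convex function such that e^{f(X_n)} is integrable for each n. Then the process Y defined by Y_n := e^{f(X_n)} is uniformly e^{−δ}-achieving, i.e., E(Y_n | F_m) ≥ e^{−δ} Y_m a.s. for all 0 ≤ m < n. -/

import Mathlib

open MeasureTheory Filter Set Real

/-!
Since `exp` is convex and increasing, `δ`-convexity of `f` makes `e^{-δ} e^{f}` lie below every
chord of `e^{f}`. At a point `x₀` of `I` that is not its maximum, this yields an affine minorant of
`e^{f}` on `I` that has nonnegative slope (as `f` is non-decreasing) and takes the value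
`e^{-δ} e^{f x₀}` at `x₀`. For such a line `ℓ`, the submartingale property gives
`ℓ (X m) ≤ ℓ (E[X n | ℱ m]) = E[ℓ (X n) | ℱ m] ≤ E[e^{f (X n)} | ℱ m]`; a countable dense family of
these lines makes the estimate hold almost surely at all points simultaneously. If `I` has a
maximum `M`, the submartingale cannot leave `M` once it is there, which handles the event
`X m = M`.
-/

def ApproxConvexOn (I : Set ℝ) (δ : ℝ) (f : ℝ → ℝ) : Prop :=
  ∀ x ∈ I, ∀ y ∈ I, ∀ t : ℝ, 0 ≤ t → t ≤ 1 →
    f (t * x + (1 - t) * y) ≤ t * f x + (1 - t) * f y + δ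

def nonnegAffineMinorants (I : Set ℝ) (h : ℝ → ℝ) : Set (ℝ × ℝ) :=
  {cd | 0 ≤ cd.1 ∧ ∀ x ∈ I, cd.1 * x + cd.2 ≤ h x}

namespace ApproxConvexOn

variable {I : Set ℝ} {δ : ℝ} {f : ℝ → ℝ}

theorem exp_neg_mul_exp_le (hf : ApproxConvexOn I δ f) {x y t : ℝ} (hx : x ∈ I) (hy : y ∈ I)
    (ht₀ : 0 ≤ t) (ht₁ : t ≤ 1) :
    exp (-δ) * exp (f (t * x + (1 - t) * y)) ≤ t * exp (f x) + (1 - t) * exp (f y) :=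
  calc exp (-δ) * exp (f (t * x + (1 - t) * y))
      = exp (f (t * x + (1 - t) * y) - δ) := by rw [← exp_add]; ring_nf
    _ ≤ exp (t * f x + (1 - t) * f y) := exp_le_exp.2 (by linarith [hf x hx y hy t ht₀ ht₁])
    _ ≤ t * exp (f x) + (1 - t) * exp (f y) := by
      simpa using convexOn_exp.2 (mem_univ (f x)) (mem_univ (f y)) ht₀ (sub_nonneg.2 ht₁)
        (by ring)

theorem exp_neg_mul_exp_chord (hf : ApproxConvexOn I δ f) {x₁ x₀ x₂ : ℝ} (h₁ : x₁ ∈ I)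
    (h₂ : x₂ ∈ I) (h₁₀ : x₁ < x₀) (h₀₂ : x₀ < x₂) :
    exp (-δ) * exp (f x₀) * (x₂ - x₁) ≤ (x₂ - x₀) * exp (f x₁) + (x₀ - x₁) * exp (f x₂) := by
  have hD : 0 < x₂ - x₁ := by linarith
  set t := (x₂ - x₀) / (x₂ - x₁)
  have ht : t * (x₂ - x₁) = x₂ - x₀ := div_mul_cancel₀ _ hD.ne'
  have hx₀ : t * x₁ + (1 - t) * x₂ = x₀ := by linarith
  have key := hf.exp_neg_mul_exp_le (t := t) h₁ h₂ (div_nonneg (by linarith) hD.le)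
    ((div_le_one hD).2 (by linarith))
  rw [hx₀] at key
  calc exp (-δ) * exp (f x₀) * (x₂ - x₁)
      ≤ (t * exp (f x₁) + (1 - t) * exp (f x₂)) * (x₂ - x₁) :=
        mul_le_mul_of_nonneg_right key hD.le
    _ = (x₂ - x₀) * exp (f x₁) + (x₀ - x₁) * exp (f x₂) := by
        linear_combination (exp (f x₁) - exp (f x₂)) * ht

end ApproxConvexOn

theorem exists_nonneg_slope_le_of_chord {I : Set ℝ} {h : ℝ → ℝ} {x₀ v y : ℝ} (hy : y ∈ I)
    (hx₀y : x₀ < y) (hle : ∀ x ∈ I, x₀ ≤ x → v ≤ h x)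
    (hchord : ∀ x₁ ∈ I, ∀ x₂ ∈ I, x₁ < x₀ → x₀ < x₂ →
      v * (x₂ - x₁) ≤ (x₂ - x₀) * h x₁ + (x₀ - x₁) * h x₂) :
    ∃ c, 0 ≤ c ∧ ∀ x ∈ I, v + c * (x - x₀) ≤ h x := by
  set R := (fun x => (h x - v) / (x - x₀)) '' {x ∈ I | x₀ < x}
  have hRne : R.Nonempty := ⟨_, mem_image_of_mem _ ⟨hy, hx₀y⟩⟩
  have hR₀ : ∀ r ∈ R, 0 ≤ r := by
    rintro _ ⟨x, ⟨hx, hx₀x⟩, rfl⟩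
    exact div_nonneg (sub_nonneg.2 (hle x hx hx₀x.le)) (sub_nonneg.2 hx₀x.le)
  refine ⟨sInf R, le_csInf hRne hR₀, fun x hx => ?_⟩
  rcases lt_trichotomy x x₀ with hlt | rfl | hgt
  · have hleft : (v - h x) / (x₀ - x) ≤ sInf R := by
      refine le_csInf hRne ?_
      rintro _ ⟨z, ⟨hz, hx₀z⟩, rfl⟩
      rw [div_le_div_iff₀ (by linarith) (by linarith)]
      nlinarith [hchord x hx z hz hlt hx₀z]
    rw [div_le_iff₀ (by linarith)] at hleft
    nlinarith
  · simpa using hle x hx le_rfl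
  · have hright : sInf R ≤ (h x - v) / (x - x₀) :=
      csInf_le ⟨0, hR₀⟩ (mem_image_of_mem _ ⟨hx, hgt⟩)
    rw [le_div_iff₀ (by linarith)] at hright
    linarith

namespace MeasureTheory.Submartingale

variable {Ω ι : Type*} [Preorder ι] {m0 : MeasurableSpace Ω} {μ : Measure Ω} [IsFiniteMeasure μ]
  {ℱ : Filtration ι m0} {X : ι → Ω → ℝ} {I : Set ℝ} {h : ℝ → ℝ} {m n : ι}

theorem affine_le_condExp (hX : Submartingale X ℱ μ) (hXI : ∀ ω, X n ω ∈ I)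
    (hh : Integrable (fun ω => h (X n ω)) μ) (hmn : m ≤ n) {cd : ℝ × ℝ}
    (hcd : cd ∈ nonnegAffineMinorants I h) :
    (fun ω => cd.1 * X m ω + cd.2) ≤ᵐ[μ] μ[fun ω => h (X n ω) | ℱ m] := by
  obtain ⟨hc, hline⟩ := hcd
  have hcomm := (cd.1 • ContinuousLinearMap.id ℝ ℝ).comp_condExp_add_const_comm (ℱ.le m)
    (hX.integrable n) cd.2
  have hmono := condExp_mono (m := ℱ m)
    (((hX.integrable n).const_mul cd.1).add (integrable_const cd.2)) hh
    (ae_of_all μ fun ω => hline (X n ω) (hXI ω))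
  filter_upwards [hX.ae_le_condExp hmn, hcomm, hmono] with ω hsub hω hmono
  simp only [smul_apply, ContinuousLinearMap.id_apply, smul_eq_mul] at hω
  calc cd.1 * X m ω + cd.2 ≤ cd.1 * μ[X n | ℱ m] ω + cd.2 := by gcongr
    _ = μ[fun ω => cd.1 * X n ω + cd.2 | ℱ m] ω := hω
    _ ≤ μ[fun ω => h (X n ω) | ℱ m] ω := hmono

theorem ae_forall_nonnegAffineMinorants_le_condExp (hX : Submartingale X ℱ μ)
    (hXI : ∀ ω, X n ω ∈ I) (hh : Integrable (fun ω => h (X n ω)) μ) (hmn : m ≤ n) :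
    ∀ᵐ ω ∂μ, ∀ cd ∈ nonnegAffineMinorants I h,
      cd.1 * X m ω + cd.2 ≤ μ[fun ω => h (X n ω) | ℱ m] ω := by
  obtain ⟨D, hDA, hDc, hAD⟩ :=
    (TopologicalSpace.IsSeparable.of_separableSpace (nonnegAffineMinorants I h)).exists_countable_dense_subset
  filter_upwards [(ae_ball_iff hDc).2 fun cd hcd => hX.affine_le_condExp hXI hh hmn (hDA hcd)]
    with ω hD cd hcd
  have hclosed : IsClosed {cd : ℝ × ℝ | cd.1 * X m ω + cd.2 ≤ μ[fun ω => h (X n ω) | ℱ m] ω} :=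
    isClosed_le (by fun_prop) continuous_const
  exact hclosed.closure_subset_iff.2 hD (hAD hcd)

theorem ae_eq_of_eq_of_le (hX : Submartingale X ℱ μ) (hmn : m ≤ n) {M : ℝ}
    (hle : ∀ᵐ ω ∂μ, X n ω ≤ M) : ∀ᵐ ω ∂μ, X m ω = M → X n ω = M := by
  set s := {ω | X m ω = M}
  have hs : MeasurableSet[ℱ m] s := (hX.stronglyAdapted m).measurable (measurableSet_singleton M)
  have hInt : ∫ ω in s, X n ω ∂μ = ∫ ω in s, M ∂μ := by
    refine le_antisymm (setIntegral_mono_ae (hX.integrable n).integrableOn integrableOn_const hle) ?_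
    calc ∫ ω in s, M ∂μ = ∫ ω in s, X m ω ∂μ :=
          setIntegral_congr_fun (ℱ.le m s hs) fun ω hω => hω.symm
      _ ≤ ∫ ω in s, X n ω ∂μ := hX.setIntegral_le hmn hs
  exact (ae_restrict_iff' (ℱ.le m s hs)).1 <|
    (integral_eq_iff_of_ae_le (hX.integrable n).restrict (integrable_const M)
      (ae_restrict_of_ae hle)).1 hInt

theorem ae_apply_le_condExp_of_isGreatest (hX : Submartingale X ℱ μ) (hXI : ∀ ω, X n ω ∈ I)
    (hh : Integrable (fun ω => h (X n ω)) μ) (hmn : m ≤ n) :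
    ∀ᵐ ω ∂μ, IsGreatest I (X m ω) → h (X m ω) ≤ μ[fun ω => h (X n ω) | ℱ m] ω := by
  by_cases hI : ∃ M, IsGreatest I M
  swap
  · exact ae_of_all μ fun ω hω => (hI ⟨_, hω⟩).elim
  obtain ⟨M, hM⟩ := hI
  set s := {ω | X m ω = M}
  have hs : MeasurableSet[ℱ m] s := (hX.stronglyAdapted m).measurable (measurableSet_singleton M)
  have hstay := hX.ae_eq_of_eq_of_le hmn (ae_of_all μ fun ω => hM.2 (hXI ω))
  have hind : s.indicator (fun ω => h (X n ω)) =ᵐ[μ] s.indicator fun _ => h M := by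
    filter_upwards [hstay] with ω hω
    by_cases hωs : ω ∈ s
    · simp [indicator_of_mem hωs, hω hωs]
    · simp [indicator_of_notMem hωs]
  have hcond : s.indicator (μ[fun ω => h (X n ω) | ℱ m]) =ᵐ[μ] s.indicator fun _ => h M :=
    (condExp_indicator hh hs).symm.trans <| (condExp_congr_ae hind).trans <|
      (condExp_of_stronglyMeasurable (ℱ.le m) (stronglyMeasurable_const.indicator hs)
        ((integrable_const _).indicator (ℱ.le m s hs))).eventuallyEq
  filter_upwards [hcond] with ω hω hωM
  have hωs : ω ∈ s := hωM.unique hM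
  rw [indicator_of_mem hωs, indicator_of_mem hωs] at hω
  rw [hω, hωs]

end MeasureTheory.Submartingale

theorem submartingale_to_uniformly_achieving_general
    {Ω : Type*} {m0 : MeasurableSpace Ω} {μ : Measure Ω} [IsProbabilityMeasure μ]
    {I : Set ℝ}
    {ℱ : Filtration ℕ m0} {X : ℕ → Ω → ℝ}
    (hX : Submartingale X ℱ μ)
    (hXI : ∀ n ω, X n ω ∈ I)
    {δ : ℝ} (hδ : 0 ≤ δ) {f : ℝ → ℝ}
    (hmono : MonotoneOn f I)
    (hconv : ∀ x ∈ I, ∀ y ∈ I, ∀ t : ℝ, 0 ≤ t → t ≤ 1 →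
      f (t * x + (1 - t) * y) ≤ t * f x + (1 - t) * f y + δ)
    (hint : ∀ n, Integrable (fun ω => Real.exp (f (X n ω))) μ) :
    ∀ m n : ℕ, m < n →
      (fun ω => Real.exp (-δ) * Real.exp (f (X m ω))) ≤ᵐ[μ]
        μ[fun ω => Real.exp (f (X n ω)) | ℱ m] := by
  intro m n hmn
  have hf : ApproxConvexOn I δ f := hconv
  have hdamp : ∀ x, exp (-δ) * exp (f x) ≤ exp (f x) := fun x =>
    mul_le_of_le_one_left (exp_pos _).le (exp_le_one_iff.2 (by linarith))
  filter_upwards [hX.ae_forall_nonnegAffineMinorants_le_condExp (h := fun x => exp (f x)) (hXI n) (hint n) hmn.le,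
    hX.ae_apply_le_condExp_of_isGreatest (h := fun x => exp (f x)) (hXI n) (hint n) hmn.le]
    with ω hlines hmax
  by_cases hgr : IsGreatest I (X m ω)
  · exact (hdamp _).trans (hmax hgr)
  obtain ⟨y, hy, hlt⟩ : ∃ y ∈ I, X m ω < y := by
    simpa [IsGreatest, upperBounds, hXI m ω] using hgr
  obtain ⟨c, hc, hsupp⟩ := exists_nonneg_slope_le_of_chord hy hlt
    (fun x hx hle => (hdamp _).trans (exp_le_exp.2 (hmono (hXI m ω) hx hle)))
    (fun x₁ h₁ x₂ h₂ => hf.exp_neg_mul_exp_chord h₁ h₂)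
  have hline := hlines (c, exp (-δ) * exp (f (X m ω)) - c * X m ω)
    ⟨hc, fun x hx => by linarith [hsupp x hx]⟩
  linarith

/-- **From submartingales to uniformly `e^{-δ}`-achieving processes.** If `X` is an
`I`-valued submartingale, `f : I → ℝ` is non-decreasing and `δ`-convex on the interval `I`
(`δ ≥ 0`), and `e^{f(X n)}` is integrable for each `n`, then `Y n := e^{f(X n)}` is
uniformly `e^{-δ}`-achieving: `E(Y n | ℱ m) ≥ e^{-δ} Y m` a.s. for all `m < n`. -/
theorem submartingale_to_uniformly_achieving
    {Ω : Type*} {m0 : MeasurableSpace Ω} {μ : Measure Ω} [IsProbabilityMeasure μ]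
    {I : Set ℝ} (hI : Convex ℝ I)
    {ℱ : Filtration ℕ m0} {X : ℕ → Ω → ℝ}
    (hX : Submartingale X ℱ μ)
    (hXI : ∀ n ω, X n ω ∈ I)
    {δ : ℝ} (hδ : 0 ≤ δ) {f : ℝ → ℝ}
    (hmono : MonotoneOn f I)
    (hconv : ∀ x ∈ I, ∀ y ∈ I, ∀ t : ℝ, 0 ≤ t → t ≤ 1 →
      f (t * x + (1 - t) * y) ≤ t * f x + (1 - t) * f y + δ)
    (hint : ∀ n, Integrable (fun ω => Real.exp (f (X n ω))) μ) :
    ∀ m n : ℕ, m < n →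
      (fun ω => Real.exp (-δ) * Real.exp (f (X m ω))) ≤ᵐ[μ]
        μ[fun ω => Real.exp (f (X n ω)) | ℱ m] :=
  submartingale_to_uniformly_achieving_general hX hXI hδ hmono hconv hint
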